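/- arXiv:2303.15243 — 6 statements merged into one kernel-verified Lean document; each statement's English description precedes it below -/
import Mathlib

section
/- If α is a root of the polynomial f_t(X) = X^4 - tX^3 - 6X^2 + tX + 1 (over ℂ, with parameter t ∈ ℂ), then (α - 1)/(α + 1) is also a root of f_t, provided α ≠ -1. -/
/-! The Möbius map `x ↦ (x - 1)/(x + 1)` rescales `f_t`: clearing denominators gives
`(x + 1)^4 f_t((x - 1)/(x + 1)) = -4 f_t(x)`, so roots other than `-1` go to roots. -/

section

variable {K : Type*} [Field K]

def quarticEval (t x : K) : K := x ^ 4 - t * x ^ 3 - 6 * x ^ 2 + t * x + 1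

theorem quarticEval_div_mul_pow_four (t x : K) (hx : x + 1 ≠ 0) :
    quarticEval t ((x - 1) / (x + 1)) * (x + 1) ^ 4 = -4 * quarticEval t x := by
  unfold quarticEval
  field_simp
  ring

theorem quarticEval_div_eq_zero {t x : K} (hroot : quarticEval t x = 0) (hx : x + 1 ≠ 0) :
    quarticEval t ((x - 1) / (x + 1)) = 0 := by
  have h := quarticEval_div_mul_pow_four t x hx
  rw [hroot, mul_zero] at h
  exact (mul_eq_zero.mp h).resolve_right (pow_ne_zero 4 hx)

end

theorem stmt_0 (t α : ℂ) (hroot : α^4 - t*α^3 - 6*α^2 + t*α + 1 = 0)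
    (hne : α ≠ -1) :
    ((α-1)/(α+1))^4 - t*((α-1)/(α+1))^3 - 6*((α-1)/(α+1))^2
      + t*((α-1)/(α+1)) + 1 = 0 :=
  quarticEval_div_eq_zero hroot fun h => hne (eq_neg_of_add_eq_zero_left h)
end

section
/- Let t be an algebraic integer in an imaginary quadratic field with |t| ≥ 100, and suppose x, y are integers in the same field solving F_t(x,y) = μ with μ a root of unity, where F_t(X,Y) = X^4 - tX^3Y - 6X^2Y^2 + tXY^3 + Y^4. If x^4 = μ, |x| = 1, y ≠ 0, and y^3 + txy^2 - 6x^2y - tx^3 = 0, then |y| < 6.86. -/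
/-!
The cubic relation factors as `(y + t x)(y² - x²) = 5 x² y`. The factor `y + t x` is a nonzero
element of `O`, so it has norm at least `1`; with `‖x‖ = 1` this gives `‖y‖² - 1 ≤ 5 ‖y‖`, i.e.
`‖y‖ ≤ (5 + √29) / 2 < 5.2`.
-/

lemma mul_sq_sub_sq_eq_of_cubic {R : Type*} [CommRing R] {t x y : R}
    (h : y ^ 3 + t * x * y ^ 2 - 6 * x ^ 2 * y - t * x ^ 3 = 0) :
    (y + t * x) * (y ^ 2 - x ^ 2) = 5 * (x ^ 2 * y) := by
  linear_combination h

lemma norm_sq_sub_one_le_of_mul_sq_sub_sq_eq {K : Type*} [NormedField K] {w x y c : K}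
    (hw : 1 ≤ ‖w‖) (hx : ‖x‖ = 1) (h : w * (y ^ 2 - x ^ 2) = c * (x ^ 2 * y)) :
    ‖y‖ ^ 2 - 1 ≤ ‖c‖ * ‖y‖ := by
  have hprod : ‖w‖ * ‖y ^ 2 - x ^ 2‖ = ‖c‖ * ‖y‖ := by
    rw [← norm_mul, h, norm_mul, norm_mul, norm_pow, hx, one_pow, one_mul]
  have hlower : ‖y‖ ^ 2 - 1 ≤ ‖y ^ 2 - x ^ 2‖ := by
    have := norm_sub_norm_le (y ^ 2) (x ^ 2)
    rwa [norm_pow, norm_pow, hx, one_pow] at this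
  calc ‖y‖ ^ 2 - 1 ≤ ‖y ^ 2 - x ^ 2‖ := hlower
    _ ≤ ‖w‖ * ‖y ^ 2 - x ^ 2‖ := le_mul_of_one_le_left (norm_nonneg _) hw
    _ = ‖c‖ * ‖y‖ := hprod

lemma lt_of_sq_sub_one_le_five_mul {r : ℝ} (h : r ^ 2 - 1 ≤ 5 * r) : r < 6.86 := by
  nlinarith

theorem stmt_9_general (O : Subring ℂ)
    (hO : ∀ z : ℂ, z ∈ O → z ≠ 0 → 1 ≤ ‖z‖)
    (t x y : ℂ) (ht : t ∈ O) (hx : x ∈ O) (hy : y ∈ O)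
    (hxabs : ‖x‖ = 1) (hy0 : y ≠ 0)
    (heq : y^3 + t*x*y^2 - 6*x^2*y - t*x^3 = 0) :
    ‖y‖ < 6.86 := by
  have hfactor := mul_sq_sub_sq_eq_of_cubic heq
  have hx0 : x ≠ 0 := norm_ne_zero_iff.mp (by rw [hxabs]; exact one_ne_zero)
  have hw0 : y + t * x ≠ 0 := by
    intro h0
    rw [h0, zero_mul] at hfactor
    exact mul_ne_zero (by norm_num) (mul_ne_zero (pow_ne_zero 2 hx0) hy0) hfactor.symm
  have hw : 1 ≤ ‖y + t * x‖ := hO _ (O.add_mem hy (O.mul_mem ht hx)) hw0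
  have hbound := norm_sq_sub_one_le_of_mul_sq_sub_sq_eq hw hxabs hfactor
  rw [show ‖(5 : ℂ)‖ = 5 by norm_num] at hbound
  exact lt_of_sq_sub_one_le_five_mul hbound

theorem stmt_9 (O : Subring ℂ)
    (hO : ∀ z : ℂ, z ∈ O → z ≠ 0 → 1 ≤ ‖z‖)
    (t x y μ : ℂ) (ht : t ∈ O) (hx : x ∈ O) (hy : y ∈ O) (hμ : μ ∈ O)
    (htabs : 100 ≤ ‖t‖)
    (hμunit : ∃ n : ℕ, 0 < n ∧ μ^n = 1)
    (hF : x^4 - t*x^3*y - 6*x^2*y^2 + t*x*y^3 + y^4 = μ)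
    (hx4 : x^4 = μ) (hxabs : ‖x‖ = 1) (hy0 : y ≠ 0)
    (heq : y^3 + t*x*y^2 - 6*x^2*y - t*x^3 = 0) :
    ‖y‖ < 6.86 :=
  stmt_9_general O hO t x y ht hx hy hxabs hy0 heq
end

section
/- Let t ∈ ℂ with |t| ≥ 100. Then f_t(X) = X^4 - tX^3 - 6X^2 + tX + 1 has a root α with |α + 1/t| ≤ 5.01/|t|^3. -/
/-!
Writing `z` for the root of `Y ^ 2 = t * Y + 4` of smaller modulus, the quartic factors as
`(X ^ 2 - (t - z) * X - 1) * (X ^ 2 - z * X - 1)`; take `α` the root of smaller modulus of the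
first factor. Vieta gives `|z| ≈ 4 / |t|` and `|α| ≈ 1 / |t|`, and
`α + 1 / t = α * (α + z) / t`, whose modulus is therefore about `5 / |t| ^ 3`.
-/

theorem Complex.exists_sq_eq_mul_add_norm_le (b c : ℂ) :
    ∃ x : ℂ, x ^ 2 = b * x + c ∧ ‖x‖ ≤ ‖b - x‖ := by
  obtain ⟨s, hs⟩ := IsAlgClosed.exists_pow_nat_eq (b ^ 2 + 4 * c) (n := 2) two_pos
  rcases le_total ‖(b - s) / 2‖ ‖(b + s) / 2‖ with h | h
  · refine ⟨(b - s) / 2, by linear_combination hs / 4, ?_⟩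
    rwa [show b - (b - s) / 2 = (b + s) / 2 by ring]
  · refine ⟨(b + s) / 2, by linear_combination hs / 4, ?_⟩
    rwa [show b - (b + s) / 2 = (b - s) / 2 by ring]

section NormedField

variable {K : Type*} [NormedField K] {b c x : K}

theorem norm_mul_norm_sub_eq_of_sq_eq (h : x ^ 2 = b * x + c) : ‖x‖ * ‖b - x‖ = ‖c‖ := by
  rw [← norm_mul, show x * (b - x) = -c by linear_combination -h, norm_neg]

theorem norm_mul_sub_le_of_sq_eq (h : x ^ 2 = b * x + c) : ‖x‖ * (‖b‖ - ‖x‖) ≤ ‖c‖ :=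
  norm_mul_norm_sub_eq_of_sq_eq h ▸
    mul_le_mul_of_nonneg_left (norm_sub_norm_le b x) (norm_nonneg x)

theorem sq_norm_le_of_sq_eq (h : x ^ 2 = b * x + c) (hx : ‖x‖ ≤ ‖b - x‖) : ‖x‖ ^ 2 ≤ ‖c‖ :=
  norm_mul_norm_sub_eq_of_sq_eq h ▸ sq ‖x‖ ▸ mul_le_mul_of_nonneg_left hx (norm_nonneg x)

end NormedField

/-- `T`, `w`, `a` stand for `‖t‖`, `‖z‖`, `‖α‖`, with the hypotheses given by Vieta. -/
theorem mul_add_mul_sq_le_of_small_roots {T a w : ℝ} (hT : 100 ≤ T) (ha : 0 ≤ a) (hw : 0 ≤ w)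
    (hw_sq : w ^ 2 ≤ 4) (hw_mul : w * (T - w) ≤ 4)
    (ha_sq : a ^ 2 ≤ 1) (ha_mul : a * (T - w - a) ≤ 1) :
    a * (a + w) * T ^ 2 ≤ 5.01 := by
  have hw2 : w ≤ 2 := by nlinarith
  have ha1 : a ≤ 1 := by nlinarith
  have hw_small : w ≤ 0.041 := by nlinarith
  have hwT : w * T ≤ 4.002 := by nlinarith
  have ha_small : a ≤ 0.0102 := by nlinarith
  have haT : a * T ≤ 1.00053 := by nlinarith
  have haT0 : 0 ≤ a * T := by positivity
  calc a * (a + w) * T ^ 2 = (a * T) * (a * T) + (w * T) * (a * T) := by ring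
    _ ≤ 1.00053 * 1.00053 + 4.002 * 1.00053 := by gcongr
    _ ≤ 5.01 := by norm_num

theorem stmt_11 (t : ℂ) (ht : 100 ≤ ‖t‖) :
    ∃ α : ℂ, α^4 - t*α^3 - 6*α^2 + t*α + 1 = 0 ∧
      ‖α + 1/t‖ ≤ 5.01 / (‖t‖)^3 := by
  obtain ⟨z, hz, hz_le⟩ := Complex.exists_sq_eq_mul_add_norm_le t 4
  obtain ⟨α, hα, hα_le⟩ := Complex.exists_sq_eq_mul_add_norm_le (t - z) 1
  refine ⟨α, by linear_combination (α ^ 2 - z * α - 1) * hα + α ^ 2 * hz, ?_⟩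
  have ht0 : t ≠ 0 := norm_pos_iff.mp (by linarith)
  have hα_mul : ‖α‖ * (‖t‖ - ‖z‖ - ‖α‖) ≤ 1 := by
    calc ‖α‖ * (‖t‖ - ‖z‖ - ‖α‖) ≤ ‖α‖ * (‖t - z‖ - ‖α‖) := by
          gcongr
          exact norm_sub_norm_le t z
      _ ≤ 1 := by simpa using norm_mul_sub_le_of_sq_eq hα
  have hbound := mul_add_mul_sq_le_of_small_roots ht (norm_nonneg α) (norm_nonneg z)
    (by simpa using sq_norm_le_of_sq_eq hz hz_le)
    (by simpa using norm_mul_sub_le_of_sq_eq hz)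
    (by simpa using sq_norm_le_of_sq_eq hα hα_le) hα_mul
  have hkey : α + 1 / t = α * (α + z) / t := by
    field_simp
    linear_combination -hα
  rw [hkey, norm_div, norm_mul, div_le_div_iff₀ (by positivity) (by positivity)]
  calc ‖α‖ * ‖α + z‖ * ‖t‖ ^ 3 ≤ ‖α‖ * (‖α‖ + ‖z‖) * ‖t‖ ^ 2 * ‖t‖ := by
        rw [pow_succ, ← mul_assoc]
        gcongr
        exact norm_add_le α z
    _ ≤ 5.01 * ‖t‖ := by gcongr
end

section
/- Let t ∈ ℂ with |t| ≥ 100. Then f_t(X) = X^4 - tX^3 - 6X^2 + tX + 1 has a root α with |α - t| ≤ 5.02/|t|. -/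
/-!
The roots of `f_t` sum to `t`, so some root `z` has `‖t‖ ≤ 4‖z‖`. Rewriting `f_t(z) = 0` as
`(z - t)(z³ - z) = 5z² - 1` gives `‖z - t‖ ≤ (5‖z‖² + 1)/(‖z‖³ - ‖z‖) ≈ 5/‖z‖`, and feeding
`‖z‖ ≥ ‖t‖ - ‖z - t‖` back into this bound twice yields `‖z - t‖ ≤ 5.02/‖t‖`.
-/

open Polynomial

theorem Multiset.exists_mem_norm_sum_le_card_mul_norm {E : Type*} [SeminormedAddCommGroup E]
    {s : Multiset E} (hs : s ≠ 0) : ∃ z ∈ s, ‖s.sum‖ ≤ s.card * ‖z‖ := by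
  classical
  obtain ⟨z, hz, hmax⟩ := s.toFinset.exists_max_image (‖·‖) (by simpa using hs)
  refine ⟨z, Multiset.mem_toFinset.mp hz, ?_⟩
  calc ‖s.sum‖ ≤ (s.map (‖·‖)).sum := norm_multiset_sum_le s
    _ ≤ (s.map (‖·‖)).card • ‖z‖ := Multiset.sum_le_card_nsmul _ _ (by simpa using hmax)
    _ = s.card * ‖z‖ := by rw [Multiset.card_map, nsmul_eq_mul]

theorem Polynomial.exists_isRoot_norm_nextCoeff_le {k : Type*} [NormedField k] [IsAlgClosed k]
    {p : k[X]} (hp : p.Monic) (hdeg : 0 < p.natDegree) :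
    ∃ z, p.IsRoot z ∧ ‖p.nextCoeff‖ ≤ p.natDegree * ‖z‖ := by
  have hcard : p.roots.card = p.natDegree := IsAlgClosed.card_roots_eq_natDegree
  obtain ⟨z, hz, hle⟩ := Multiset.exists_mem_norm_sum_le_card_mul_norm
    (s := p.roots) (by rw [← Multiset.card_pos, hcard]; exact hdeg)
  refine ⟨z, isRoot_of_mem_roots hz, ?_⟩
  rwa [(IsAlgClosed.splits p).nextCoeff_eq_neg_sum_roots_of_monic hp, norm_neg, ← hcard]

-- The polynomial `f_t` of the statement.
noncomputable def quartic (t : ℂ) : ℂ[X] := X ^ 4 - C t * X ^ 3 - 6 * X ^ 2 + C t * X + 1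

section Quartic

variable (t : ℂ)

theorem quartic_natDegree : (quartic t).natDegree = 4 := by
  unfold quartic; compute_degree!

theorem quartic_monic : (quartic t).Monic := by
  unfold quartic; monicity!

theorem quartic_nextCoeff : (quartic t).nextCoeff = -t := by
  rw [nextCoeff_of_natDegree_pos (by rw [quartic_natDegree]; norm_num), quartic_natDegree]
  simp [quartic, coeff_one, coeff_X_pow]

theorem eval_quartic (z : ℂ) :
    (quartic t).eval z = z ^ 4 - t * z ^ 3 - 6 * z ^ 2 + t * z + 1 := by
  simp [quartic]

theorem exists_isRoot_quartic_norm_le : ∃ z, (quartic t).IsRoot z ∧ ‖t‖ ≤ 4 * ‖z‖ := by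
  obtain ⟨z, hz, hle⟩ := exists_isRoot_norm_nextCoeff_le (quartic_monic t)
    (by rw [quartic_natDegree]; norm_num)
  rw [quartic_nextCoeff, norm_neg, quartic_natDegree] at hle
  exact ⟨z, hz, by exact_mod_cast hle⟩

end Quartic

theorem quartic_root_eq {t z : ℂ} (hz : (quartic t).IsRoot z) :
    (z - t) * (z ^ 3 - z) = 5 * z ^ 2 - 1 := by
  have h := hz.eq_zero
  rw [eval_quartic] at h
  linear_combination h

theorem norm_sub_mul_le_of_isRoot_quartic {t z : ℂ} (hz : (quartic t).IsRoot z) :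
    ‖z - t‖ * (‖z‖ ^ 3 - ‖z‖) ≤ 5 * ‖z‖ ^ 2 + 1 := by
  have hcube : ‖z‖ ^ 3 - ‖z‖ ≤ ‖z ^ 3 - z‖ := by
    rw [← norm_pow]; exact norm_sub_norm_le _ _
  calc ‖z - t‖ * (‖z‖ ^ 3 - ‖z‖) ≤ ‖z - t‖ * ‖z ^ 3 - z‖ := by gcongr
    _ = ‖5 * z ^ 2 - 1‖ := by rw [← norm_mul, quartic_root_eq hz]
    _ ≤ ‖5 * z ^ 2‖ + ‖(1 : ℂ)‖ := norm_sub_le _ _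
    _ = 5 * ‖z‖ ^ 2 + 1 := by simp [norm_pow]

theorem mul_le_of_mul_cube_sub_le {s x d : ℝ} (hs : 100 ≤ s) (hsx : s ≤ 4 * x) (hsxd : s ≤ x + d)
    (hd : 0 ≤ d) (hdx : d * (x ^ 3 - x) ≤ 5 * x ^ 2 + 1) : d * s ≤ 5.02 := by
  have hcube : 0 < x ^ 3 - x := by nlinarith
  have hd1 : d ≤ 1 := by nlinarith [mul_nonneg hd hcube.le]
  have hx : 99 ≤ x := by linarith
  have hd2 : d ≤ 0.051 := by nlinarith [sq_nonneg (x - 99)]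
  have hx' : s ≤ x + 0.051 := by linarith
  calc d * s ≤ d * (x + 0.051) := by gcongr
    _ ≤ 5.02 := by
      rw [← mul_le_mul_iff_left₀ hcube]
      calc d * (x + 0.051) * (x ^ 3 - x) = (x + 0.051) * (d * (x ^ 3 - x)) := by ring
        _ ≤ (x + 0.051) * (5 * x ^ 2 + 1) := by gcongr
        _ ≤ 5.02 * (x ^ 3 - x) := by nlinarith [sq_nonneg (x - 99)]

theorem stmt_12 (t : ℂ) (ht : 100 ≤ ‖t‖) :
    ∃ α : ℂ, α^4 - t*α^3 - 6*α^2 + t*α + 1 = 0 ∧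
      ‖α - t‖ ≤ 5.02 / ‖t‖ := by
  obtain ⟨z, hz, hzt⟩ := exists_isRoot_quartic_norm_le t
  refine ⟨z, by rw [← eval_quartic]; exact hz.eq_zero, ?_⟩
  have htri : ‖t‖ ≤ ‖z‖ + ‖z - t‖ := by
    simpa using norm_sub_le z (z - t)
  rw [le_div_iff₀ (by linarith)]
  exact mul_le_of_mul_cube_sub_le ht hzt htri (norm_nonneg _)
    (norm_sub_mul_le_of_isRoot_quartic hz)
end

section
/- Let t ∈ ℂ with |t| ≥ 100. Then f_t(X) = X^4 - tX^3 - 6X^2 + tX + 1 has roots α₁ and α₃ with |α₁ + 1| ≤ 2.16/|t| and |α₃ - 1| ≤ 2.16/|t|. -/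
/-!
Write `f_t = (X² - aX - 1)(X² - bX - 1)` with `a + b = t`, `ab = -4`, and let `a` be the root of
smaller norm, so that `‖a‖ ≈ 4/‖t‖`. The roots of `X² - aX - 1` are `(a ± v)/2` with
`v² = a² + 4`; putting `v = 2 - w` with `w` the smaller root of `w² - 4w - a² = 0` gives
`‖w‖ ≈ ‖a‖²/4`, and the two roots `(a + w)/2 - 1` and `(a - w)/2 + 1` lie within
`(‖a‖ + ‖w‖)/2` of `-1` and `1`.
-/

open Polynomial in
theorem IsAlgClosed.exists_add_eq_mul_eq {K : Type*} [Field K] [IsAlgClosed K] (p q : K) :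
    ∃ x y : K, x + y = p ∧ x * y = q := by
  obtain ⟨x, hx⟩ := IsAlgClosed.exists_root (C 1 * X ^ 2 + C (-p) * X + C q)
    (by rw [degree_quadratic one_ne_zero]; decide)
  refine ⟨x, p - x, by ring, ?_⟩
  simp only [IsRoot, eval_add, eval_mul, eval_C, eval_pow, eval_X] at hx
  linear_combination -hx

theorem IsAlgClosed.exists_add_eq_mul_eq_norm_le {K : Type*} [NormedField K] [IsAlgClosed K]
    (p q : K) : ∃ x y : K, x + y = p ∧ x * y = q ∧ ‖x‖ ≤ ‖y‖ := by
  obtain ⟨x, y, hp, hq⟩ := IsAlgClosed.exists_add_eq_mul_eq p q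
  rcases le_total ‖x‖ ‖y‖ with h | h
  · exact ⟨x, y, hp, hq, h⟩
  · exact ⟨y, x, by rw [add_comm, hp], by rw [mul_comm, hq], h⟩

theorem sq_norm_le_norm_mul {K : Type*} [NormedField K] {x y : K} (h : ‖x‖ ≤ ‖y‖) :
    ‖x‖ ^ 2 ≤ ‖x * y‖ := by
  rw [norm_mul, sq]
  gcongr

theorem norm_mul_norm_add_sub_le {K : Type*} [NormedField K] (x y : K) :
    ‖x‖ * (‖x + y‖ - ‖x‖) ≤ ‖x * y‖ := by
  rw [norm_mul]
  gcongr
  linarith [norm_add_le x y]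

theorem quartic_eq_mul_quadratics {R : Type*} [CommRing R] {t a b : R} (hab : a + b = t)
    (hab' : a * b = -4) (x : R) :
    x ^ 4 - t * x ^ 3 - 6 * x ^ 2 + t * x + 1 = (x ^ 2 - a * x - 1) * (x ^ 2 - b * x - 1) := by
  linear_combination (x ^ 3 - x) * hab - x ^ 2 * hab'

theorem roots_sq_sub_mul_sub_one {K : Type*} [Field K] [CharZero K] {a w : K}
    (hw : w * (4 - w) = -a ^ 2) :
    ((a + w) / 2 - 1) ^ 2 - a * ((a + w) / 2 - 1) - 1 = 0 ∧
      ((a - w) / 2 + 1) ^ 2 - a * ((a - w) / 2 + 1) - 1 = 0 := by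
  constructor <;> linear_combination -hw / 4

theorem half_add_le_of_small_root_bounds {A B C : ℝ} (hA : 100 ≤ A) (hB : 0 ≤ B)
    (hB4 : B ^ 2 ≤ 4) (hBA : B * (A - B) ≤ 4) (hCB : C ^ 2 ≤ B ^ 2) (hC4 : C * (4 - C) ≤ B ^ 2) :
    (B + C) / 2 ≤ 2.16 / A := by
  have hB2 : B ≤ 2 := by nlinarith
  have hB_small : B ≤ 4 / 98 := by rw [le_div_iff₀ (by norm_num)]; nlinarith
  have hC_le : C ≤ B := by nlinarith
  have hC_small : C * 3.9 ≤ B ^ 2 := by nlinarith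
  rw [div_le_div_iff₀ (by norm_num) (by linarith)]
  nlinarith

theorem stmt_13 (t : ℂ) (ht : 100 ≤ ‖t‖) :
    ∃ α₁ α₃ : ℂ,
      (α₁^4 - t*α₁^3 - 6*α₁^2 + t*α₁ + 1 = 0 ∧
        ‖α₁ + 1‖ ≤ 2.16 / ‖t‖) ∧
      (α₃^4 - t*α₃^3 - 6*α₃^2 + t*α₃ + 1 = 0 ∧
        ‖α₃ - 1‖ ≤ 2.16 / ‖t‖) := by
  obtain ⟨a, b, hab, hab', hab_le⟩ := IsAlgClosed.exists_add_eq_mul_eq_norm_le t (-4)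
  obtain ⟨w, w', hw, hw', hw_le⟩ := IsAlgClosed.exists_add_eq_mul_eq_norm_le (4 : ℂ) (-a ^ 2)
  obtain ⟨h₁, h₃⟩ := roots_sq_sub_mul_sub_one (a := a) (w := w)
    (by rw [← hw', ← hw, add_sub_cancel_left])
  have hbound : (‖a‖ + ‖w‖) / 2 ≤ 2.16 / ‖t‖ := by
    have hB4 := sq_norm_le_norm_mul hab_le
    have hBA := norm_mul_norm_add_sub_le a b
    have hCB := sq_norm_le_norm_mul hw_le
    have hC4 := norm_mul_norm_add_sub_le w w'
    simp only [hab, hab', hw, hw', norm_neg, norm_pow] at hB4 hBA hCB hC4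
    norm_num at hB4 hBA hCB hC4
    exact half_add_le_of_small_root_bounds ht (norm_nonneg a) hB4 hBA hCB hC4
  refine ⟨(a + w) / 2 - 1, (a - w) / 2 + 1, ⟨?_, ?_⟩, ⟨?_, ?_⟩⟩
  · rw [quartic_eq_mul_quadratics hab hab', h₁, zero_mul]
  · calc ‖(a + w) / 2 - 1 + 1‖ = ‖a + w‖ / 2 := by simp
      _ ≤ (‖a‖ + ‖w‖) / 2 := by gcongr; exact norm_add_le a w
      _ ≤ 2.16 / ‖t‖ := hbound
  · rw [quartic_eq_mul_quadratics hab hab', h₃, zero_mul]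
  · calc ‖(a - w) / 2 + 1 - 1‖ = ‖a - w‖ / 2 := by simp
      _ ≤ (‖a‖ + ‖w‖) / 2 := by gcongr; exact norm_sub_le a w
      _ ≤ 2.16 / ‖t‖ := hbound
end

section
/- Let α ∈ ℂ and suppose there exist real numbers k₀, l₀ > 0 and E, Q > 1 such that for every positive integer r there are Gaussian-type imaginary quadratic integers p_r, q_r (elements of the ring of integers O of a fixed imaginary quadratic field, so that nonzero elements have absolute value ≥ 1) with |q_r| < k₀Q^r, |q_r·α - p_r| ≤ l₀·E^{-r}, and p_r·q_{r+1} ≠ p_{r+1}·q_r. Then for all p, q ∈ O with |q| ≥ 1/(2l₀), |α - p/q| > 1/(c·|q|^{κ+1}) where c = 2k₀Q(2l₀E)^κ and κ = log Q / log E. -/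
/-!
Given `P / Q'`, take the least `r ≥ 1` with `2 l₀ ‖Q'‖ < E ^ r`. The determinant condition makes one of
the two algebraic integers `q n * P - p n * Q'`, `n ∈ {r, r + 1}`, nonzero, so it has norm at least
`1`; less than `1/2` of that is accounted for by the approximation `q n * α ≈ p n`, and the rest forces
`‖q n‖ ‖Q'‖ ‖α - P / Q'‖ > 1/2`. Since `E ^ (r - 1) ≤ 2 l₀ ‖Q'‖`, the bound `‖q n‖ < k₀ Q ^ (r + 1)`
becomes a power of `‖Q'‖` with exponent `κ = log Q / log E`.
-/

open Real

theorem mul_sub_mul_ne_zero_or {R : Type*} [CommRing R] [IsDomain R] {a b a' b' x y : R}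
    (hy : y ≠ 0) (h : b * a' ≠ b' * a) : a * x - b * y ≠ 0 ∨ a' * x - b' * y ≠ 0 := by
  by_contra! ⟨h₁, h₂⟩
  exact h (mul_right_cancel₀ hy (by linear_combination a * h₂ - a' * h₁))

theorem norm_mul_sub_mul_le {K : Type*} [NormedField K] (α a b x y : K) (hy : y ≠ 0) :
    ‖a * x - b * y‖ ≤ ‖a‖ * ‖y‖ * ‖α - x / y‖ + ‖a * α - b‖ * ‖y‖ :=
  calc ‖a * x - b * y‖ = ‖(a * α - b) * y - a * y * (α - x / y)‖ := by
        congr 1; field_simp; ring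
    _ ≤ ‖(a * α - b) * y‖ + ‖a * y * (α - x / y)‖ := norm_sub_le _ _
    _ = ‖a‖ * ‖y‖ * ‖α - x / y‖ + ‖a * α - b‖ * ‖y‖ := by simp only [norm_mul]; ring

theorem pow_le_rpow_log_div_log {E Q X : ℝ} (hE : 1 < E) (hQ : 1 ≤ Q) {n : ℕ} (h : E ^ n ≤ X) :
    Q ^ n ≤ X ^ (log Q / log E) := by
  have hE₀ : 0 ≤ E := by linarith
  have hEκ : E ^ (log Q / log E) = Q := rpow_logb (by linarith) hE.ne' (by linarith)
  calc Q ^ n = (E ^ n) ^ (log Q / log E) := by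
        rw [← rpow_natCast_mul hE₀, mul_comm, rpow_mul_natCast hE₀, hEκ]
    _ ≤ X ^ (log Q / log E) :=
        rpow_le_rpow (by positivity) h (div_nonneg (log_nonneg hQ) (log_nonneg hE.le))

theorem one_half_lt_of_two_mul_norm_lt_pow (O : Subring ℂ)
    (hO : ∀ z : ℂ, z ∈ O → z ≠ 0 → 1 ≤ ‖z‖) {α : ℂ} {k₀ l₀ E Q : ℝ}
    (hk₀ : 0 ≤ k₀) (hl₀ : 0 ≤ l₀) (hE : 1 ≤ E) (hQ : 1 ≤ Q) {p q : ℕ → ℂ}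
    (hpO : ∀ r : ℕ, 1 ≤ r → p r ∈ O) (hqO : ∀ r : ℕ, 1 ≤ r → q r ∈ O)
    (hq : ∀ r : ℕ, 1 ≤ r → ‖q r‖ < k₀ * Q ^ r)
    (happrox : ∀ r : ℕ, 1 ≤ r → ‖q r * α - p r‖ ≤ l₀ * E ^ (-(r : ℝ)))
    (hdet : ∀ r : ℕ, 1 ≤ r → p r * q (r + 1) ≠ p (r + 1) * q r)
    {P Q' : ℂ} (hP : P ∈ O) (hQ' : Q' ∈ O) (hQ'₀ : Q' ≠ 0)
    {r : ℕ} (hr : 1 ≤ r) (hrE : 2 * l₀ * ‖Q'‖ < E ^ r) :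
    1 / 2 < k₀ * Q ^ (r + 1) * (‖Q'‖ * ‖α - P / Q'‖) := by
  obtain ⟨n, hrn, hnr, hne⟩ : ∃ n, r ≤ n ∧ n ≤ r + 1 ∧ q n * P - p n * Q' ≠ 0 := by
    rcases mul_sub_mul_ne_zero_or (x := P) hQ'₀ (hdet r hr) with h | h
    exacts [⟨r, le_rfl, r.le_succ, h⟩, ⟨r + 1, r.le_succ, le_rfl, h⟩]
  have hn : 1 ≤ n := hr.trans hrn
  have hmem : q n * P - p n * Q' ∈ O :=
    O.sub_mem (O.mul_mem (hqO n hn) hP) (O.mul_mem (hpO n hn) hQ')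
  have hlower := (hO _ hmem hne).trans (norm_mul_sub_mul_le α _ _ _ _ hQ'₀)
  have hEr : 0 < E ^ r := by positivity
  have hsmall : ‖q n * α - p n‖ * ‖Q'‖ < 1 / 2 :=
    calc ‖q n * α - p n‖ * ‖Q'‖ ≤ l₀ * (E ^ n)⁻¹ * ‖Q'‖ := by
          gcongr
          simpa [rpow_neg (by linarith : (0 : ℝ) ≤ E)] using happrox n hn
      _ ≤ l₀ * (E ^ r)⁻¹ * ‖Q'‖ := by gcongr
      _ < 1 / 2 := by
          rw [mul_right_comm, ← div_eq_mul_inv, div_lt_iff₀ hEr]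
          linarith
  have hqn : ‖q n‖ ≤ k₀ * Q ^ (r + 1) :=
    (hq n hn).le.trans (by gcongr)
  have : ‖q n‖ * ‖Q'‖ * ‖α - P / Q'‖ ≤ k₀ * Q ^ (r + 1) * (‖Q'‖ * ‖α - P / Q'‖) := by
    rw [mul_assoc]; gcongr
  linarith

theorem stmt_19 (O : Subring ℂ)
    (hO : ∀ z : ℂ, z ∈ O → z ≠ 0 → 1 ≤ ‖z‖)
    (α : ℂ) (k₀ l₀ E Q : ℝ)
    (hk₀ : 0 < k₀) (hl₀ : 0 < l₀) (hE : 1 < E) (hQ : 1 < Q)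
    (p q : ℕ → ℂ)
    (hpO : ∀ r : ℕ, 1 ≤ r → p r ∈ O) (hqO : ∀ r : ℕ, 1 ≤ r → q r ∈ O)
    (hq : ∀ r : ℕ, 1 ≤ r → ‖q r‖ < k₀ * Q^r)
    (happrox : ∀ r : ℕ, 1 ≤ r → ‖q r * α - p r‖ ≤ l₀ * E^(-(r:ℝ)))
    (hdet : ∀ r : ℕ, 1 ≤ r → p r * q (r+1) ≠ p (r+1) * q r)
    (P Q' : ℂ) (hP : P ∈ O) (hQ' : Q' ∈ O)
    (hQbig : 1/(2*l₀) ≤ ‖Q'‖) :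
    1 / ((2*k₀*Q*(2*l₀*E)^(Real.log Q / Real.log E)) *
        ‖Q'‖^(Real.log Q / Real.log E + 1))
      < ‖α - P/Q'‖ := by
  set κ := log Q / log E
  set A := ‖Q'‖
  set t := ‖α - P / Q'‖
  have hA : 0 < A := (by positivity : 0 < 1 / (2 * l₀)).trans_le hQbig
  have hD : 1 ≤ 2 * l₀ * A := by rwa [div_le_iff₀ (by positivity), mul_comm] at hQbig
  obtain ⟨m, hEm, hEm'⟩ := exists_nat_pow_near hD hE
  have hhalf := one_half_lt_of_two_mul_norm_lt_pow O hO hk₀.le hl₀.le hE.le hQ.le hpO hqO hq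
    happrox hdet hP hQ' (norm_pos_iff.mp hA) (Nat.le_add_left 1 m) hEm'
  have hQm : Q ^ (m + 1) ≤ (2 * l₀ * E) ^ κ * A ^ κ := by
    rw [← mul_rpow (by positivity) hA.le]
    refine pow_le_rpow_log_div_log hE hQ.le ?_
    rw [pow_succ]; nlinarith
  rw [div_lt_iff₀ (by positivity), rpow_add_one hA.ne']
  calc 1 < 2 * k₀ * Q * Q ^ (m + 1) * (A * t) := by rw [pow_succ] at hhalf; linarith
    _ ≤ 2 * k₀ * Q * ((2 * l₀ * E) ^ κ * A ^ κ) * (A * t) := by gcongr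
    _ = t * (2 * k₀ * Q * (2 * l₀ * E) ^ κ * (A ^ κ * A)) := by ring
end
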